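/- Let α > 0 and λ₁, λ₂ > 0. Then for all r ∈ (0,1), the derivatives satisfy (φ_λ^−)'(r) ≥ λ₁ and (ψ_λ^−)'(r) ≥ λ₂, where φ_λ^−(r) = λ₁ r − λ₂(1 − r^α)^{2/α} and ψ_λ^−(r) = λ₂ r − λ₁(1 − r^{α/2})^{1/α}. Moreover, if α ∈ (0,1] ∪ [2,∞), then (φ_λ^−)' and (ψ_λ^−)' are each monotone on (0,1). -/

import Mathlib

open Set

/-- The constant `C_α`. -/
noncomputable def Calpha (α : ℝ) : ℝ :=
  if 1 < α ∧ α < 2 then 2 * (2 - α) ^ (2 / α - 1) * (α - 1) ^ (1 - 1 / α) else 2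

/-- The phase `φ_λ⁻(r) = l₁ r - l₂ (1 - r^α)^{2/α}`. -/
noncomputable def phaseMinus (α l₁ l₂ r : ℝ) : ℝ :=
  l₁ * r - l₂ * (1 - r ^ α) ^ (2 / α)

/-- The phase `ψ_λ⁻(r) = l₂ r - l₁ (1 - r^{α/2})^{1/α}`. -/
noncomputable def psiMinus (α l₁ l₂ r : ℝ) : ℝ :=
  l₂ * r - l₁ * (1 - r ^ (α / 2)) ^ (1 / α)

/-!
Both phases are of the form `r ↦ a r - b (1 - r^e)^q` with `b, e, q > 0`, whose derivative on
`(0,1)` is `a + b e q · r^(e-1) (1 - r^e)^(q-1)`. The second summand is nonnegative, giving the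
lower bound `a`. The factor `r^(e-1)` increases when `e ≥ 1`, and `(1 - r^e)^(q-1)` increases when
`q ≤ 1` since `1 - r^e` decreases; both inequalities reverse when `e ≤ 1 ≤ q`. For `α ≥ 2` both
phases fall in the first case, for `α ≤ 1` in the second.
-/

noncomputable def powerPhase (a b e q r : ℝ) : ℝ :=
  a * r - b * (1 - r ^ e) ^ q

lemma phaseMinus_eq_powerPhase (α l₁ l₂ : ℝ) :
    phaseMinus α l₁ l₂ = powerPhase l₁ l₂ α (2 / α) := rfl

lemma psiMinus_eq_powerPhase (α l₁ l₂ : ℝ) :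
    psiMinus α l₁ l₂ = powerPhase l₂ l₁ (α / 2) (1 / α) := rfl

section UnitInterval

variable {e p q r x y : ℝ}

lemma one_sub_rpow_pos (he : 0 < e) (hr : r ∈ Ioo (0 : ℝ) 1) : 0 < 1 - r ^ e := by
  linarith [Real.rpow_lt_one hr.1.le hr.2 he]

lemma one_sub_rpow_le_one_sub_rpow (he : 0 ≤ e) (hx : 0 ≤ x) (hxy : x ≤ y) :
    1 - y ^ e ≤ 1 - x ^ e :=
  sub_le_sub_left (Real.rpow_le_rpow hx hxy he) 1

lemma monotoneOn_rpow_mul_one_sub_rpow_rpow (he : 0 < e) (hp : 0 ≤ p) (hq : q ≤ 0) :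
    MonotoneOn (fun r : ℝ => r ^ p * (1 - r ^ e) ^ q) (Ioo 0 1) := by
  intro x hx y hy hxy
  have hy₁ := one_sub_rpow_pos he hy
  exact mul_le_mul (Real.rpow_le_rpow hx.1.le hxy hp)
    (Real.rpow_le_rpow_of_nonpos hy₁ (one_sub_rpow_le_one_sub_rpow he.le hx.1.le hxy) hq)
    (Real.rpow_nonneg (one_sub_rpow_pos he hx).le q) (Real.rpow_nonneg hy.1.le p)

lemma antitoneOn_rpow_mul_one_sub_rpow_rpow (he : 0 < e) (hp : p ≤ 0) (hq : 0 ≤ q) :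
    AntitoneOn (fun r : ℝ => r ^ p * (1 - r ^ e) ^ q) (Ioo 0 1) := by
  intro x hx y hy hxy
  have hy₁ := one_sub_rpow_pos he hy
  exact mul_le_mul (Real.rpow_le_rpow_of_nonpos hx.1 hxy hp)
    (Real.rpow_le_rpow hy₁.le (one_sub_rpow_le_one_sub_rpow he.le hx.1.le hxy) hq)
    (Real.rpow_nonneg hy₁.le q) (Real.rpow_nonneg hx.1.le p)

end UnitInterval

section PowerPhase

variable {a b e q r : ℝ}

lemma hasDerivAt_powerPhase (he : 0 < e) (hr : r ∈ Ioo (0 : ℝ) 1) :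
    HasDerivAt (powerPhase a b e q)
      (a + b * e * q * (r ^ (e - 1) * (1 - r ^ e) ^ (q - 1))) r := by
  have hbase : HasDerivAt (fun x : ℝ => 1 - x ^ e) (-(e * r ^ (e - 1))) r :=
    (Real.hasDerivAt_rpow_const (Or.inl hr.1.ne')).const_sub 1
  have hpow := hbase.rpow_const (p := q) (Or.inl (one_sub_rpow_pos he hr).ne')
  exact (((hasDerivAt_id r).const_mul a).sub (hpow.const_mul b)).congr_deriv (by ring)

lemma deriv_powerPhase (he : 0 < e) (hr : r ∈ Ioo (0 : ℝ) 1) :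
    deriv (powerPhase a b e q) r = a + b * e * q * (r ^ (e - 1) * (1 - r ^ e) ^ (q - 1)) :=
  (hasDerivAt_powerPhase he hr).deriv

lemma le_deriv_powerPhase (hb : 0 ≤ b) (he : 0 < e) (hq : 0 ≤ q) (hr : r ∈ Ioo (0 : ℝ) 1) :
    a ≤ deriv (powerPhase a b e q) r := by
  rw [deriv_powerPhase he hr, le_add_iff_nonneg_right]
  exact mul_nonneg (by positivity)
    (mul_nonneg (Real.rpow_nonneg hr.1.le _) (Real.rpow_nonneg (one_sub_rpow_pos he hr).le _))

lemma monotoneOn_deriv_powerPhase (hb : 0 ≤ b) (he : 1 ≤ e) (hq₀ : 0 ≤ q) (hq : q ≤ 1) :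
    MonotoneOn (deriv (powerPhase a b e q)) (Ioo 0 1) := by
  have he₀ : 0 < e := by linarith
  refine MonotoneOn.congr (fun x hx y hy hxy => ?_)
    (fun r hr => (deriv_powerPhase he₀ hr).symm)
  gcongr a + b * e * q * ?_
  exact monotoneOn_rpow_mul_one_sub_rpow_rpow he₀ (by linarith) (by linarith) hx hy hxy

lemma antitoneOn_deriv_powerPhase (hb : 0 ≤ b) (he₀ : 0 < e) (he : e ≤ 1) (hq : 1 ≤ q) :
    AntitoneOn (deriv (powerPhase a b e q)) (Ioo 0 1) := by
  refine AntitoneOn.congr (fun x hx y hy hxy => ?_)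
    (fun r hr => (deriv_powerPhase he₀ hr).symm)
  gcongr a + b * e * q * ?_
  exact antitoneOn_rpow_mul_one_sub_rpow_rpow he₀ (by linarith) (by linarith) hx hy hxy

end PowerPhase

theorem phaseMinus_properties (α l₁ l₂ : ℝ) (hα : 0 < α)
    (hl₁ : 0 < l₁) (hl₂ : 0 < l₂) :
    (∀ r ∈ Ioo (0 : ℝ) 1, l₁ ≤ deriv (phaseMinus α l₁ l₂) r) ∧
    (∀ r ∈ Ioo (0 : ℝ) 1, l₂ ≤ deriv (psiMinus α l₁ l₂) r) ∧
    (α ≤ 1 ∨ 2 ≤ α →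
      (MonotoneOn (deriv (phaseMinus α l₁ l₂)) (Ioo 0 1) ∨
        AntitoneOn (deriv (phaseMinus α l₁ l₂)) (Ioo 0 1)) ∧
      (MonotoneOn (deriv (psiMinus α l₁ l₂)) (Ioo 0 1) ∨
        AntitoneOn (deriv (psiMinus α l₁ l₂)) (Ioo 0 1))) := by
  rw [phaseMinus_eq_powerPhase, psiMinus_eq_powerPhase]
  refine ⟨fun r => le_deriv_powerPhase hl₂.le hα (by positivity),
    fun r => le_deriv_powerPhase hl₁.le (by positivity) (by positivity), ?_⟩
  rintro (hα₁ | hα₂)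
  · have h2α : 1 ≤ 2 / α := by rw [le_div_iff₀ hα]; linarith
    have h1α : 1 ≤ 1 / α := by rw [le_div_iff₀ hα]; linarith
    exact ⟨.inr (antitoneOn_deriv_powerPhase hl₂.le hα hα₁ h2α),
      .inr (antitoneOn_deriv_powerPhase hl₁.le (by positivity) (by linarith) h1α)⟩
  · have h2α : 2 / α ≤ 1 := by rw [div_le_iff₀ hα]; linarith
    have h1α : 1 / α ≤ 1 := by rw [div_le_iff₀ hα]; linarith
    exact ⟨.inl (monotoneOn_deriv_powerPhase hl₂.le (by linarith) (by positivity) h2α),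
      .inl (monotoneOn_deriv_powerPhase hl₁.le (by linarith) (by positivity) h1α)⟩
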